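/- Let (P,Q) be a Kronecker Poisson pair of rank two on a 3-manifold, with local Casimir functions f of P, g of Q, and h of P+Q, all with nonvanishing differentials. Then df, dg, dh are linearly dependent at every point. -/
import Mathlib

open Matrix

lemma parallel_of_cross_eq_zero {v w : Fin 3 → ℝ} (hv : v ≠ 0)
    (h : crossProduct v w = 0) : ∃ c : ℝ, w = c • v := by
  have h' : crossProduct w v = 0 := by rw [← cross_anticomm, h, neg_zero]
  have hni : ¬ LinearIndependent ℝ ![w, v] := by
    rw [← crossProduct_ne_zero_iff_linearIndependent]
    simpa using h'
  rw [linearIndependent_fin2] at hni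
  push_neg at hni
  simp only [Matrix.cons_val_one, Matrix.head_cons, Matrix.cons_val_zero] at hni
  rcases hni hv with ⟨c, hc⟩
  exact ⟨c, hc.symm⟩

/-- The gradient of a function on ℝ³ (coordinates indexed by `Fin 3`). -/
noncomputable def grad (f : (Fin 3 → ℝ) → ℝ) (x : Fin 3 → ℝ) : Fin 3 → ℝ :=
  fun i => fderiv ℝ f x (Pi.single i 1)

/- STATEMENT 6: same setting as Statement 5; the differentials df, dg, dh of
the Casimirs f, g, h of P, Q, P+Q are linearly dependent at every point. -/
theorem casimir_differentials_dependent
    (p q : (Fin 3 → ℝ) → Fin 3 → ℝ)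
    (hp : ContDiff ℝ (⊤ : ℕ∞) p) (hq : ContDiff ℝ (⊤ : ℕ∞) q)
    (hKron : ∀ x, LinearIndependent ℝ ![p x, q x])
    (f g h : (Fin 3 → ℝ) → ℝ)
    (hf : ContDiff ℝ (⊤ : ℕ∞) f) (hg : ContDiff ℝ (⊤ : ℕ∞) g) (hh : ContDiff ℝ (⊤ : ℕ∞) h)
    (hdf : ∀ x, grad f x ≠ 0) (hdg : ∀ x, grad g x ≠ 0) (hdh : ∀ x, grad h x ≠ 0)
    (hcf : ∀ x, crossProduct (grad f x) (p x) = 0)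
    (hcg : ∀ x, crossProduct (grad g x) (q x) = 0)
    (hch : ∀ x, crossProduct (grad h x) (p x + q x) = 0) :
    ∀ x, ¬ LinearIndependent ℝ ![grad f x, grad g x, grad h x] := by
  intro x hLI
  obtain ⟨a, ha⟩ := parallel_of_cross_eq_zero (hdf x) (hcf x)
  obtain ⟨b, hb⟩ := parallel_of_cross_eq_zero (hdg x) (hcg x)
  obtain ⟨c, hc⟩ := parallel_of_cross_eq_zero (hdh x) (hch x)
  have hc0 : c ≠ 0 := by
    intro h0
    rw [h0, zero_smul] at hc
    have := (Fintype.linearIndependent_iff.mp (hKron x)) ![1, 1] (by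
      simpa [Fin.sum_univ_two] using hc) 0
    norm_num at this
  have key : a • grad f x + b • grad g x + (-c) • grad h x = 0 := by
    rw [← ha, ← hb]
    have : (-c) • grad h x = -(p x + q x) := by rw [neg_smul, ← hc]
    rw [this]; abel
  have := (Fintype.linearIndependent_iff.mp hLI) ![a, b, -c] (by
    simpa [Fin.sum_univ_three] using key) 2
  simp at this
  exact hc0 this
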